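/- Every braided harmonic vase BHV((pᵢ, wᵢ)ᵢ) is a compact subset of ℝ⁴. -/

import Mathlib

open Real Set

noncomputable section

/-- The pedestal of a braided harmonic vase: the disc of radius 3 in the plane
`z = w = 0` in `ℝ⁴`. -/
def BHVpedestal : Set (ℝ × ℝ × ℝ × ℝ) :=
  {q | q.1 ^ 2 + q.2.1 ^ 2 ≤ 9 ∧ q.2.2.1 = 0 ∧ q.2.2.2 = 0}

/-- The wall of a harmonic vase in `ℝ⁴` with height `m`, parameter `p` and braiding
function `w` (the fourth coordinate is `|φ| * w z`). -/
def BHVwall (p : ℝ) (w : ℝ → ℝ) (m : ℝ) : Set (ℝ × ℝ × ℝ × ℝ) :=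
  {q | ∃ z ∈ Set.Ioc (0 : ℝ) m, ∃ φ ∈ Set.Icc (-π) π,
    q = ((|φ| / π * Real.sin (π * p / z) + 2) * Real.cos φ,
         (|φ| / π * Real.sin (π * p / z) + 2) * Real.sin φ, z, |φ| * w z)}

/-- The braided harmonic vase determined by parameters `p i` and braiding functions
`w i` (only the indices `i ≥ 1` are used; the `i`-th wall has height `1/i`). -/
def BHV (p : ℕ → ℝ) (w : ℕ → ℝ → ℝ) : Set (ℝ × ℝ × ℝ × ℝ) :=
  BHVpedestal ∪ ⋃ i : ℕ, BHVwall (p (i + 1)) (w (i + 1)) (1 / (i + 1 : ℝ))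

/-- The hypotheses on the data `(pᵢ, wᵢ)` of a braided harmonic vase: the `pᵢ` are
positive and pairwise algebraically independent over `ℚ`, and the `wᵢ` are continuous
self-maps `(0,1/i] → [0,1/i]` with `wᵢ(x) < x`, with `wᵢ(x) ≠ wⱼ(x)` (`j < i`) at heights
where the walls `i` and `j` would meet, and vanishing near every inner-height of `pᵢ`. -/
structure IsBHVData (p : ℕ → ℝ) (w : ℕ → ℝ → ℝ) : Prop where
  pos : ∀ i : ℕ, 1 ≤ i → 0 < p i
  algInd : ∀ i j : ℕ, 1 ≤ i → 1 ≤ j → i ≠ j → AlgebraicIndependent ℚ ![p i, p j]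
  contOn : ∀ i : ℕ, 1 ≤ i → ContinuousOn (w i) (Set.Ioc (0 : ℝ) (1 / (i : ℝ)))
  mapsTo : ∀ i : ℕ, 1 ≤ i → ∀ x ∈ Set.Ioc (0 : ℝ) (1 / (i : ℝ)),
    w i x ∈ Set.Icc (0 : ℝ) (1 / (i : ℝ))
  lt : ∀ i : ℕ, 1 ≤ i → ∀ x ∈ Set.Ioc (0 : ℝ) (1 / (i : ℝ)), w i x < x
  ne : ∀ i j : ℕ, 1 ≤ j → j < i → ∀ x ∈ Set.Ioc (0 : ℝ) (1 / (i : ℝ)),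
    Real.sin (π * p i / x) = Real.sin (π * p j / x) → w i x ≠ w j x
  innerZero : ∀ i : ℕ, 1 ≤ i → ∀ h ∈ Set.Ioc (0 : ℝ) (1 / (i : ℝ)),
    Real.sin (π * p i / h) = -1 → ∀ᶠ x in nhds h, w i x = 0

/-!
Cut the vase at a small height `δ`. Only finitely many walls reach above `δ`, and the part of
each of them at height `≥ δ` is the continuous image of a compact rectangle in `(z, φ)`, because
`wᵢ` is continuous away from `z = 0`. Below height `δ` every point of a wall lies within `π δ`
of the pedestal, since `0 ≤ |φ| wᵢ(z) ≤ π z`. So for every `ε` the vase is a compact set plus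
the `ε`-thickening of the compact pedestal, and a finite subcover of the pedestal therefore
absorbs all but a compact part of any open cover.
-/

open Filter Metric Topology

lemma isCompact_of_forall_subset_union_thickening {X : Type*} [PseudoMetricSpace X]
    {S P : Set X} (hP : IsCompact P) (hPS : P ⊆ S)
    (h : ∀ ε > 0, ∃ K ⊆ S, IsCompact K ∧ S ⊆ K ∪ thickening ε P) : IsCompact S := by
  classical
  refine isCompact_of_finite_subcover fun U hU hSU => ?_
  obtain ⟨t₀, hP₀⟩ := hP.elim_finite_subcover U hU (hPS.trans hSU)
  obtain ⟨ε, hε, hV⟩ := hP.exists_thickening_subset_open (isOpen_biUnion fun i _ => hU i) hP₀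
  obtain ⟨K, hKS, hK, hSK⟩ := h ε hε
  obtain ⟨t₁, hK₁⟩ := hK.elim_finite_subcover U hU (hKS.trans hSU)
  refine ⟨t₁ ∪ t₀, hSK.trans (union_subset_union hK₁ hV) |>.trans ?_⟩
  simp only [Finset.set_biUnion_union, Finset.set_biUnion_coe, subset_refl]

lemma isCompact_BHVpedestal : IsCompact BHVpedestal := by
  have hclosed : IsClosed BHVpedestal :=
    show IsClosed ({q : ℝ × ℝ × ℝ × ℝ | q.1 ^ 2 + q.2.1 ^ 2 ≤ 9} ∩
      ({q | q.2.2.1 = 0} ∩ {q | q.2.2.2 = 0})) from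
    (isClosed_le (by fun_prop) continuous_const).inter
      ((isClosed_eq (by fun_prop) continuous_const).inter
        (isClosed_eq (by fun_prop) continuous_const))
  refine (isCompact_Icc (a := ((-3, -3, 0, 0) : ℝ × ℝ × ℝ × ℝ)) (b := (3, 3, 0, 0))
    ).of_isClosed_subset hclosed fun q ⟨hq, h₃, h₄⟩ => ?_
  have h₁ : -3 ≤ q.1 ∧ q.1 ≤ 3 :=
    abs_le_of_sq_le_sq' (by nlinarith [sq_nonneg q.2.1]) (by norm_num)
  have h₂ : -3 ≤ q.2.1 ∧ q.2.1 ≤ 3 :=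
    abs_le_of_sq_le_sq' (by nlinarith [sq_nonneg q.1]) (by norm_num)
  simp only [mem_Icc, Prod.le_def, h₃, h₄, le_refl, and_true]
  exact ⟨⟨h₁.1, h₂.1⟩, h₁.2, h₂.2⟩

def BHVwallPoint (p : ℝ) (w : ℝ → ℝ) (x : ℝ × ℝ) : ℝ × ℝ × ℝ × ℝ :=
  ((|x.2| / π * sin (π * p / x.1) + 2) * cos x.2,
    (|x.2| / π * sin (π * p / x.1) + 2) * sin x.2, x.1, |x.2| * w x.1)

lemma BHVwall_eq_image (p : ℝ) (w : ℝ → ℝ) (m : ℝ) :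
    BHVwall p w m = BHVwallPoint p w '' (Ioc 0 m ×ˢ Icc (-π) π) := by
  ext q
  simp only [BHVwall, BHVwallPoint, mem_ofPred_eq, mem_image, Prod.exists, mem_prod]
  grind

lemma continuousOn_BHVwallPoint (p : ℝ) {w : ℝ → ℝ} {m : ℝ} (hw : ContinuousOn w (Ioc 0 m)) :
    ContinuousOn (BHVwallPoint p w) (Ioc 0 m ×ˢ univ) := by
  have hz : ∀ x ∈ Ioc 0 m ×ˢ (univ : Set ℝ), x.1 ≠ 0 := fun x hx => hx.1.1.ne'
  have hwz : ContinuousOn (fun x : ℝ × ℝ => w x.1) (Ioc 0 m ×ˢ univ) :=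
    hw.comp continuous_fst.continuousOn fun x hx => hx.1
  have hr : ContinuousOn (fun x : ℝ × ℝ => |x.2| / π * sin (π * p / x.1) + 2)
      (Ioc 0 m ×ˢ univ) := by
    fun_prop (disch := first | exact fun _ _ => pi_ne_zero | assumption)
  exact (hr.mul (by fun_prop)).prodMk ((hr.mul (by fun_prop)).prodMk
    (continuousOn_fst.prodMk ((continuous_abs.comp continuous_snd).continuousOn.mul hwz)))

lemma abs_div_pi_mul_sin_add_two_mem_Icc (p z : ℝ) {φ : ℝ} (hφ : φ ∈ Icc (-π) π) :
    |φ| / π * sin (π * p / z) + 2 ∈ Icc 1 3 := by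
  have h₀ : 0 ≤ |φ| / π := by positivity
  have h₁ : |φ| / π ≤ 1 := div_le_one_of_le₀ (abs_le.2 hφ) pi_pos.le
  have hs := abs_le.1 (abs_sin_le_one (π * p / z))
  constructor <;> nlinarith

lemma BHVwallPoint_sq_add_sq_le (p : ℝ) (w : ℝ → ℝ) {x : ℝ × ℝ} (hφ : x.2 ∈ Icc (-π) π) :
    (BHVwallPoint p w x).1 ^ 2 + (BHVwallPoint p w x).2.1 ^ 2 ≤ 9 := by
  obtain ⟨h₁, h₃⟩ := abs_div_pi_mul_sin_add_two_mem_Icc p x.1 hφ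
  set r := |x.2| / π * sin (π * p / x.1) + 2
  calc (r * cos x.2) ^ 2 + (r * sin x.2) ^ 2 = r ^ 2 := by
        linear_combination r ^ 2 * cos_sq_add_sin_sq x.2
    _ ≤ 9 := by nlinarith

lemma BHVwallPoint_mem_thickening (p : ℝ) {w : ℝ → ℝ} {x : ℝ × ℝ} {ε : ℝ} (hz : 0 < x.1)
    (hφ : x.2 ∈ Icc (-π) π) (hw : w x.1 ∈ Icc 0 x.1) (hε : π * x.1 < ε) :
    BHVwallPoint p w x ∈ thickening ε BHVpedestal := by
  refine mem_thickening_iff.2 ⟨((BHVwallPoint p w x).1, (BHVwallPoint p w x).2.1, 0, 0),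
    ⟨BHVwallPoint_sq_add_sq_le p w hφ, rfl, rfl⟩, ?_⟩
  have hπ : 1 < π := by linarith [pi_gt_three]
  have hε₀ : 0 < ε := lt_of_le_of_lt (by positivity) hε
  have hφw : |x.2| * w x.1 ≤ π * x.1 := mul_le_mul (abs_le.2 hφ) hw.2 hw.1 pi_pos.le
  simp only [Prod.dist_eq, dist_self, Real.dist_eq, sub_zero, BHVwallPoint]
  simp only [abs_of_pos hz, abs_of_nonneg (mul_nonneg (abs_nonneg x.2) hw.1)]
  refine max_lt (by linarith) (max_lt (by linarith) (max_lt (by nlinarith) (by linarith)))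

theorem isCompact_BHVpedestal_union_iUnion_BHVwall (p : ℕ → ℝ) {w : ℕ → ℝ → ℝ} {m : ℕ → ℝ}
    (hm : Tendsto m atTop (𝓝 0)) (hcont : ∀ i, ContinuousOn (w i) (Ioc 0 (m i)))
    (hw : ∀ i, ∀ z ∈ Ioc 0 (m i), w i z ∈ Icc 0 z) :
    IsCompact (BHVpedestal ∪ ⋃ i, BHVwall (p i) (w i) (m i)) := by
  refine isCompact_of_forall_subset_union_thickening isCompact_BHVpedestal subset_union_left
    fun ε hε => ?_
  have hδ : 0 < ε / 4 := by positivity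
  obtain ⟨N, hN⟩ := eventually_atTop.1 (hm.eventually (gt_mem_nhds hδ))
  have hlow : ∀ i, Icc (ε / 4) (m i) ×ˢ Icc (-π) π ⊆ Ioc 0 (m i) ×ˢ Icc (-π) π :=
    fun i => Set.prod_mono (Icc_subset_Ioc hδ le_rfl) subset_rfl
  refine ⟨BHVpedestal ∪ ⋃ i ∈ Finset.range N,
    BHVwallPoint (p i) (w i) '' (Icc (ε / 4) (m i) ×ˢ Icc (-π) π), ?_, ?_, ?_⟩
  · refine union_subset_union_right _ (iUnion₂_subset fun i _ => ?_)
    exact (image_mono (hlow i)).trans ((BHVwall_eq_image _ _ _).ge.trans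
      (subset_iUnion (fun i => BHVwall (p i) (w i) (m i)) i))
  · exact isCompact_BHVpedestal.union (Finset.isCompact_biUnion _ fun i _ =>
      (isCompact_Icc.prod isCompact_Icc).image_of_continuousOn
        ((continuousOn_BHVwallPoint _ (hcont i)).mono
          ((hlow i).trans (Set.prod_mono subset_rfl (subset_univ _)))))
  · rintro q (hq | hq)
    · exact Or.inl (Or.inl hq)
    obtain ⟨i, hi⟩ := mem_iUnion.1 hq
    rw [BHVwall_eq_image] at hi
    obtain ⟨x, ⟨hz, hφ⟩, rfl⟩ := hi
    rcases le_or_gt (ε / 4) x.1 with hδz | hδz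
    · refine Or.inl (Or.inr (mem_iUnion₂.2
        ⟨i, Finset.mem_range.2 ?_, ⟨x, ⟨⟨hδz, hz.2⟩, hφ⟩, rfl⟩⟩))
      exact lt_of_not_ge fun hNi => (hN i hNi).not_ge (hδz.trans hz.2)
    · refine Or.inr (BHVwallPoint_mem_thickening _ hz.1 hφ (hw i _ hz) ?_)
      nlinarith [pi_le_four, hz.1]

/-- every braided harmonic vase is a compact subset of `ℝ⁴`. -/
theorem BHV_isCompact (p : ℕ → ℝ) (w : ℕ → ℝ → ℝ) (hd : IsBHVData p w) :
    IsCompact (BHV p w) := by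
  have hi (i : ℕ) : 1 ≤ i + 1 := Nat.le_add_left 1 i
  have hm (i : ℕ) : Ioc (0 : ℝ) (1 / ((i + 1 : ℕ) : ℝ)) = Ioc 0 (1 / ((i : ℝ) + 1)) := by
    push_cast; rfl
  refine isCompact_BHVpedestal_union_iUnion_BHVwall (fun i => p (i + 1))
    (w := fun i => w (i + 1))
    tendsto_one_div_add_atTop_nhds_zero_nat (fun i => hm i ▸ hd.contOn (i + 1) (hi i))
    fun i z hz => ?_
  rw [← hm] at hz
  exact ⟨(hd.mapsTo _ (hi i) z hz).1, (hd.lt _ (hi i) z hz).le⟩
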